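/- Let V be an idempotent variety, F₂ its free algebra on generators x̄, z̄, and fix k ≤ n and elements s₁ = x̄, s₂, ..., sₙ = z̄ realizing an undirected path (each consecutive pair related by →, ←, or ⇠). Define s⁽¹'ᵏ⁾ᵢ = s̄ᵢ(x̄, sₖ) for i ≤ k and s⁽¹'ᵏ⁾ᵢ = s̄ᵢ(x̄, sᵢ) for i ≥ k, and inductively s⁽ᵖ⁺¹'ᵏ⁾ᵢ = s̄ᵢ(x̄, s⁽ᵖ'ᵏ⁾ₖ) for i ≤ k and s⁽ᵖ⁺¹'ᵏ⁾ᵢ = s̄ᵢ(x̄, s⁽ᵖ'ᵏ⁾ᵢ) for i ≥ k. Then for every p ≥ 1: s⁽ᵖ'ᵏ⁾₁ = x̄, s⁽ᵖ'ᵏ⁾ₙ = z̄, each consecutive pair s⁽ᵖ'ᵏ⁾ᵢ, s⁽ᵖ'ᵏ⁾ᵢ₊₁ is related by the same type of arrow as sᵢ, sᵢ₊₁, and if 1 ≤ i ≤ j ≤ k and sᵢ ⇢ sⱼ then s⁽ᵖ'ᵏ⁾ᵢ ⇢ s⁽ᵖ'ᵏ⁾ⱼ. -/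
import Mathlib


/-- A signature: a type of operation symbols with arities. -/
structure Sgn where
  ops : Type
  arity : ops → ℕ

/-- Terms over a signature with variables from `V`. -/
inductive Trm (S : Sgn) (V : Type) : Type
  | var : V → Trm S V
  | op : (f : S.ops) → (Fin (S.arity f) → Trm S V) → Trm S V

/-- An algebra for a signature. -/
structure Alg (S : Sgn) where
  carrier : Type
  interp : (f : S.ops) → (Fin (S.arity f) → carrier) → carrier

/-- Evaluation of a term in an algebra under an assignment. -/
def Trm.eval {S : Sgn} {V : Type} (A : Alg S) (asgn : V → A.carrier) :
    Trm S V → A.carrier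
  | .var v => asgn v
  | .op f args => A.interp f (fun i => (args i).eval A asgn)

/-- The identity `t ≈ u` holds throughout the class (variety) `K`. -/
def HoldsIn {S : Sgn} {V : Type} (K : Set (Alg S)) (t u : Trm S V) : Prop :=
  ∀ A ∈ K, ∀ asgn : V → A.carrier, t.eval A asgn = u.eval A asgn

/-- Substitution of terms for variables. -/
def Trm.subst {S : Sgn} {V W : Type} (σ : V → Trm S W) : Trm S V → Trm S W
  | .var v => σ v
  | .op f args => .op f (fun i => (args i).subst σ)

/-- Every basic operation is idempotent throughout `K`. -/
def IdemK {S : Sgn} (K : Set (Alg S)) : Prop :=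
  ∀ A ∈ K, ∀ (f : S.ops) (a : A.carrier), A.interp f (fun _ => a) = a

abbrev T3 (S : Sgn) := Trm S (Fin 3)
abbrev T2 (S : Sgn) := Trm S (Fin 2)

def x3 {S : Sgn} : T3 S := .var 0
def y3 {S : Sgn} : T3 S := .var 1
def z3 {S : Sgn} : T3 S := .var 2

/-- The generator x̄ of the free algebra on two generators (terms as representatives). -/
def xF {S : Sgn} : T2 S := .var 0
/-- The generator z̄. -/
def zF {S : Sgn} : T2 S := .var 1

/-- `app3 t a b c` is the term `t(a,b,c)`. -/
def app3 {S : Sgn} {V : Type} (t : T3 S) (a b c : Trm S V) : Trm S V :=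
  t.subst ![a, b, c]

/-- The binary term `ŝ(x,z)` viewed as a ternary term (not depending on `y`). -/
def bin3 {S : Sgn} (s : T2 S) : T3 S := s.subst ![x3, z3]

/-- `sub2 s a b` is `s̄(a,b)`, the composition of binary terms. -/
def sub2 {S : Sgn} (s a b : T2 S) : T2 S := s.subst ![a, b]

/-- Dashed arrow `s ⇢ r`. -/
def DashedTo {S : Sgn} (K : Set (Alg S)) (s r : T2 S) : Prop :=
  ∃ t : T3 S, HoldsIn K (bin3 s) (app3 t x3 x3 z3) ∧ HoldsIn K (app3 t x3 z3 z3) (bin3 r)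

/-- Solid arrow `s → r`. -/
def SolidTo {S : Sgn} (K : Set (Alg S)) (s r : T2 S) : Prop :=
  ∃ t : T3 S, HoldsIn K (bin3 s) (app3 t x3 x3 z3) ∧ HoldsIn K (app3 t x3 z3 z3) (bin3 r) ∧
    HoldsIn K (app3 t x3 y3 x3) x3

/-- Edge labels for pattern paths: `→`, `←`, `⇠`. -/
inductive ArrowType | right | left | dashedLeft

/-- The relation on `F₂` associated to an edge label. -/
def ArrowRel {S : Sgn} (K : Set (Alg S)) : ArrowType → T2 S → T2 S → Prop
  | .right => SolidTo K
  | .left => fun a b => SolidTo K b a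
  | .dashedLeft => fun a b => DashedTo K b a

/-- The sequence `s₁,…,sₙ` realizes the pattern path associated to `f`,
with `s₁ = x̄` and `sₙ = z̄`. -/
def RealizesWith {S : Sgn} (K : Set (Alg S)) (f : ℕ → ArrowType) (n : ℕ)
    (s : ℕ → T2 S) : Prop :=
  s 1 = xF ∧ s n = zF ∧ ∀ i, 1 ≤ i → i < n → ArrowRel K (f i) (s i) (s (i+1))

section Helpers
variable {S : Sgn}

theorem eval_subst' {V W : Type} (A : Alg S) (σ : V → Trm S W) (g : W → A.carrier) :
    ∀ t : Trm S V, (t.subst σ).eval A g = t.eval A (fun v => (σ v).eval A g)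
  | .var v => rfl
  | .op f args => by
    simp only [Trm.subst, Trm.eval]
    congr 1
    funext i
    exact eval_subst' A σ g (args i)

theorem eval_const' {V : Type} {A : Alg S}
    (hA : ∀ (f : S.ops) (a : A.carrier), A.interp f (fun _ => a) = a)
    (a : A.carrier) : ∀ (t : Trm S V) (g : V → A.carrier), (∀ v, g v = a) → t.eval A g = a
  | .var v, g, h => h v
  | .op f args, g, h => by
    simp only [Trm.eval]
    have h2 : (fun i => (args i).eval A g) = fun _ => a :=
      funext fun i => eval_const' hA a (args i) g h
    rw [h2]; exact hA f a

/-- Binary evaluation. -/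
def b2 (A : Alg S) (s : T2 S) (u w : A.carrier) : A.carrier := s.eval A ![u, w]
/-- Ternary evaluation. -/
def b3 (A : Alg S) (t : T3 S) (u v w : A.carrier) : A.carrier := t.eval A ![u, v, w]

theorem b2_diag {K : Set (Alg S)} (hid : IdemK K) {A : Alg S} (hA : A ∈ K)
    (c : T2 S) (u : A.carrier) : b2 A c u u = u := by
  apply eval_const' (hid A hA) u c
  intro v; fin_cases v <;> rfl

theorem eval_bin3 (A : Alg S) (s : T2 S) (g : Fin 3 → A.carrier) :
    (bin3 s).eval A g = b2 A s (g 0) (g 2) := by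
  unfold bin3 b2
  rw [eval_subst']
  congr 1
  funext v
  fin_cases v <;> rfl

theorem eval_app3 {V : Type} (A : Alg S) (t : T3 S) (a b c : Trm S V) (g : V → A.carrier) :
    (app3 t a b c).eval A g = b3 A t (a.eval A g) (b.eval A g) (c.eval A g) := by
  unfold app3 b3
  rw [eval_subst']
  congr 1
  funext v
  fin_cases v <;> rfl

theorem b2_sub2 (A : Alg S) (s a b : T2 S) (u w : A.carrier) :
    b2 A (sub2 s a b) u w = b2 A s (b2 A a u w) (b2 A b u w) := by
  unfold b2 sub2
  rw [eval_subst']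
  congr 1
  funext v
  fin_cases v <;> rfl

theorem b2_xF (A : Alg S) (u w : A.carrier) : b2 A (xF : T2 S) u w = u := rfl
theorem b2_zF (A : Alg S) (u w : A.carrier) : b2 A (zF : T2 S) u w = w := rfl
theorem b3_x3 (A : Alg S) (u v w : A.carrier) : b3 A (x3 : T3 S) u v w = u := rfl
theorem b3_y3 (A : Alg S) (u v w : A.carrier) : b3 A (y3 : T3 S) u v w = v := rfl
theorem b3_z3 (A : Alg S) (u v w : A.carrier) : b3 A (z3 : T3 S) u v w = w := rfl

theorem b3_subst (A : Alg S) (t α β γ : T3 S) (u v w : A.carrier) :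
    b3 A (t.subst ![α, β, γ]) u v w
      = b3 A t (b3 A α u v w) (b3 A β u v w) (b3 A γ u v w) := by
  unfold b3
  rw [eval_subst']
  congr 1
  funext i
  fin_cases i <;> rfl

theorem b3_bin3 (A : Alg S) (c : T2 S) (u v w : A.carrier) :
    b3 A (bin3 c) u v w = b2 A c u w := eval_bin3 A c ![u, v, w]

theorem b3_yy (A : Alg S) (tm : T3 S) (u v w : A.carrier) :
    b3 A (tm.subst ![x3, y3, y3]) u v w = b3 A tm u v v := by
  rw [b3_subst, b3_x3, b3_y3]

/-- Pointwise form of the first dashed-arrow identity. -/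
theorem pw1 {K : Set (Alg S)} {s : T2 S} {t : T3 S}
    (h : HoldsIn K (bin3 s) (app3 t x3 x3 z3)) {A : Alg S} (hA : A ∈ K)
    (u w : A.carrier) : b2 A s u w = b3 A t u u w := by
  have := h A hA ![u, u, w]
  rwa [eval_bin3, eval_app3] at this

/-- Pointwise form of the second dashed-arrow identity. -/
theorem pw2 {K : Set (Alg S)} {r : T2 S} {t : T3 S}
    (h : HoldsIn K (app3 t x3 z3 z3) (bin3 r)) {A : Alg S} (hA : A ∈ K)
    (u w : A.carrier) : b3 A t u w w = b2 A r u w := by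
  have := h A hA ![u, w, w]
  rwa [eval_bin3, eval_app3] at this

/-- Pointwise form of the solid-arrow identity. -/
theorem pw3 {K : Set (Alg S)} {t : T3 S}
    (h : HoldsIn K (app3 t x3 y3 x3) x3) {A : Alg S} (hA : A ∈ K)
    (u v : A.carrier) : b3 A t u v u = u := by
  have := h A hA ![u, v, u]
  rwa [eval_app3] at this

theorem holds1_of_pw {K : Set (Alg S)} {s : T2 S} {t : T3 S}
    (h : ∀ A ∈ K, ∀ u w : A.carrier, b2 A s u w = b3 A t u u w) :
    HoldsIn K (bin3 s) (app3 t x3 x3 z3) := by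
  intro A hA g
  rw [eval_bin3, eval_app3]
  exact h A hA (g 0) (g 2)

theorem holds2_of_pw {K : Set (Alg S)} {r : T2 S} {t : T3 S}
    (h : ∀ A ∈ K, ∀ u w : A.carrier, b3 A t u w w = b2 A r u w) :
    HoldsIn K (app3 t x3 z3 z3) (bin3 r) := by
  intro A hA g
  rw [eval_bin3, eval_app3]
  exact h A hA (g 0) (g 2)

theorem holds3_of_pw {K : Set (Alg S)} {t : T3 S}
    (h : ∀ A ∈ K, ∀ u v : A.carrier, b3 A t u v u = u) :
    HoldsIn K (app3 t x3 y3 x3) x3 := by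
  intro A hA g
  rw [eval_app3]
  exact h A hA (g 0) (g 1)

/-- Composition lemma, dashed version. -/
theorem lemB_dashed {K : Set (Alg S)} (hid : IdemK K) {a b c d : T2 S}
    (hab : DashedTo K a b) (hcd : DashedTo K c d) :
    DashedTo K (sub2 a xF c) (sub2 b xF d) := by
  obtain ⟨t, ht1, ht2⟩ := hab
  obtain ⟨tm, hm1, hm2⟩ := hcd
  refine ⟨t.subst ![x3, tm.subst ![x3, y3, y3], tm], holds1_of_pw ?_, holds2_of_pw ?_⟩
  · intro A hA u w
    rw [b2_sub2, b2_xF, b3_subst, b3_x3, b3_yy]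
    rw [← pw1 hm1 hA u u, b2_diag hid hA]
    rw [← pw1 hm1 hA u w, ← pw1 ht1 hA]
  · intro A hA u w
    rw [b3_subst, b3_x3, b3_yy, pw2 hm2 hA, pw2 ht2 hA, b2_sub2, b2_xF]

/-- Composition lemma, solid version. -/
theorem lemB_solid {K : Set (Alg S)} (hid : IdemK K) {a b c d : T2 S}
    (hab : SolidTo K a b) (hcd : SolidTo K c d) :
    SolidTo K (sub2 a xF c) (sub2 b xF d) := by
  obtain ⟨t, ht1, ht2, ht3⟩ := hab
  obtain ⟨tm, hm1, hm2, hm3⟩ := hcd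
  refine ⟨t.subst ![x3, tm.subst ![x3, y3, y3], tm], holds1_of_pw ?_, holds2_of_pw ?_,
    holds3_of_pw ?_⟩
  · intro A hA u w
    rw [b2_sub2, b2_xF, b3_subst, b3_x3, b3_yy]
    rw [← pw1 hm1 hA u u, b2_diag hid hA]
    rw [← pw1 hm1 hA u w, ← pw1 ht1 hA]
  · intro A hA u w
    rw [b3_subst, b3_x3, b3_yy, pw2 hm2 hA, pw2 ht2 hA, b2_sub2, b2_xF]
  · intro A hA u v
    rw [b3_subst, b3_x3, b3_yy, pw3 hm3 hA, pw3 ht3 hA]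

theorem solid_refl {K : Set (Alg S)} (hid : IdemK K) (c : T2 S) : SolidTo K c c := by
  refine ⟨bin3 c, holds1_of_pw ?_, holds2_of_pw ?_, holds3_of_pw ?_⟩
  · intro A hA u w; rw [b3_bin3]
  · intro A hA u w; rw [b3_bin3]
  · intro A hA u v; rw [b3_bin3, b2_diag hid hA]

theorem dashed_refl {K : Set (Alg S)} (hid : IdemK K) (c : T2 S) : DashedTo K c c :=
  let ⟨t, h1, h2, _⟩ := solid_refl (K := K) hid c
  ⟨t, h1, h2⟩

theorem arrow_refl {K : Set (Alg S)} (hid : IdemK K) (τ : ArrowType) (c : T2 S) :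
    ArrowRel K τ c c := by
  cases τ with
  | right => exact solid_refl hid c
  | left => exact solid_refl hid c
  | dashedLeft => exact dashed_refl hid c

theorem lemB_arrow {K : Set (Alg S)} (hid : IdemK K) {τ : ArrowType} {a b c d : T2 S}
    (h1 : ArrowRel K τ a b) (h2 : ArrowRel K τ c d) :
    ArrowRel K τ (sub2 a xF c) (sub2 b xF d) := by
  cases τ with
  | right => exact lemB_solid hid h1 h2
  | left => exact lemB_solid hid h1 h2
  | dashedLeft => exact lemB_dashed hid h1 h2

theorem sub2_xF (a b : T2 S) : sub2 (xF : T2 S) a b = a := rfl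
theorem sub2_zF (a b : T2 S) : sub2 (zF : T2 S) a b = b := rfl

end Helpers

/-- the iterated sequences `s⁽ᵖ'ᵏ⁾` still realize the given
undirected path, have the right endpoints (up to `V`-equivalence), and preserve
the dashed arrows `sᵢ ⇢ sⱼ` for `1 ≤ i ≤ j ≤ k`. -/
theorem iterated_sequence_properties {S : Sgn} (K : Set (Alg S)) (hid : IdemK K)
    (n k : ℕ) (hk1 : 1 ≤ k) (hkn : k ≤ n)
    (f : ℕ → ArrowType) (s : ℕ → T2 S) (hreal : RealizesWith K f n s)
    (sp : ℕ → ℕ → T2 S)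
    (h1le : ∀ i, i ≤ k → sp 1 i = sub2 (s i) xF (s k))
    (h1ge : ∀ i, k ≤ i → sp 1 i = sub2 (s i) xF (s i))
    (hsle : ∀ p, 1 ≤ p → ∀ i, i ≤ k → sp (p+1) i = sub2 (s i) xF (sp p k))
    (hsge : ∀ p, 1 ≤ p → ∀ i, k ≤ i → sp (p+1) i = sub2 (s i) xF (sp p i)) :
    ∀ p, 1 ≤ p →
      HoldsIn K (sp p 1) (xF : T2 S) ∧ HoldsIn K (sp p n) (zF : T2 S) ∧
      (∀ i, 1 ≤ i → i < n → ArrowRel K (f i) (sp p i) (sp p (i+1))) ∧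
      (∀ i j, 1 ≤ i → i ≤ j → j ≤ k → DashedTo K (s i) (s j) →
        DashedTo K (sp p i) (sp p j)) := by
  -- `s n = z̄` forever: syntactic identity
  have hzn : ∀ p, 1 ≤ p → sp p n = zF := by
    intro p hp
    induction p, hp using Nat.le_induction with
    | base => rw [h1ge n hkn, hreal.2.1, sub2_zF]
    | succ p hp ih => rw [hsge p hp n hkn, ih, hreal.2.1, sub2_zF]
  -- below `k`, all terms share a common inner argument
  have hc : ∀ p, 1 ≤ p → ∃ c : T2 S, ∀ i, i ≤ k → sp p i = sub2 (s i) xF c := by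
    intro p hp
    match p, hp with
    | 1, _ => exact ⟨s k, h1le⟩
    | (q+1)+1, _ =>
      exact ⟨sp (q+1) k, fun i hik => hsle (q+1) (Nat.le_add_left 1 q) i hik⟩
  -- the edges persist
  have edge : ∀ p, 1 ≤ p → ∀ i, 1 ≤ i → i < n →
      ArrowRel K (f i) (sp p i) (sp p (i+1)) := by
    intro p hp
    induction p, hp using Nat.le_induction with
    | base =>
      intro i hi1 hin
      by_cases hik : i + 1 ≤ k
      · rw [h1le i (by omega), h1le (i+1) hik]
        exact lemB_arrow hid (hreal.2.2 i hi1 hin) (arrow_refl hid _ _)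
      · have hki : k ≤ i := by omega
        rw [h1ge i hki, h1ge (i+1) (by omega)]
        exact lemB_arrow hid (hreal.2.2 i hi1 hin) (hreal.2.2 i hi1 hin)
    | succ p hp ih =>
      intro i hi1 hin
      by_cases hik : i + 1 ≤ k
      · rw [hsle p hp i (by omega), hsle p hp (i+1) hik]
        exact lemB_arrow hid (hreal.2.2 i hi1 hin) (arrow_refl hid _ _)
      · have hki : k ≤ i := by omega
        rw [hsge p hp i hki, hsge p hp (i+1) (by omega)]
        exact lemB_arrow hid (hreal.2.2 i hi1 hin) (ih i hi1 hin)
  intro p hp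
  obtain ⟨c, hcEq⟩ := hc p hp
  refine ⟨?_, ?_, edge p hp, ?_⟩
  · have h1 : sp p 1 = xF := by rw [hcEq 1 hk1, hreal.1, sub2_xF]
    rw [h1]; intro A _ g; rfl
  · rw [hzn p hp]; intro A _ g; rfl
  · intro i j hi1 hij hjk hd
    rw [hcEq i (le_trans hij hjk), hcEq j hjk]
    exact lemB_dashed hid hd (dashed_refl hid c)
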